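/- Let C be a cycle in ℝ^d through points v_0, v_1, ..., v_m = v_0 (edges are straight segments, lengths measured in Euclidean norm). Let e = (v_0, v_1) be one edge of C and let u = v_0 be fixed. Then for every vertex v_j of C, the chord length ‖v_0 - v_j‖ satisfies 2‖v_0 - v_j‖ ≤ |C|, where |C| is the total length of the cycle. Consequently, if a spanning tree equals C minus edge e (so OPT = |C| - |e|), then any intermediate edge x = (v_0, v_j) arising during an edge slide along C satisfies |x| ≤ OPT/2 + |e|/2, and the intermediate tree has length at most (3/2)·OPT. -/
import Mathlib


open Finset

/-- Chords of a polygonal cycle and the 3/2 bound for edge slides.  Let `C` be a closed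
polygonal cycle `v 0, v 1, …, v m = v 0` in `ℝ^d` with total length `|C|`, let `e = (v 0, v 1)`
be one of its edges and write `OPT = |C| - |e|` for the length of the spanning tree `C - e`.
Then every chord from `v 0` to a vertex `v j` satisfies `2‖v 0 - v j‖ ≤ |C|`, hence
`‖v 0 - v j‖ ≤ OPT/2 + |e|/2`, and the intermediate tree arising during an edge slide, of
length `|C| - 2|e| + ‖v 0 - v j‖`, has length at most `(3/2)·OPT`. -/
theorem edge_slide_three_halves {d m : ℕ} (hm : 2 ≤ m)
    (v : ℕ → EuclideanSpace ℝ (Fin d)) (hper : v m = v 0) :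
    ∀ j ≤ m,
      2 * dist (v 0) (v j) ≤ (∑ i ∈ Finset.range m, dist (v i) (v (i + 1))) ∧
      dist (v 0) (v j) ≤
        ((∑ i ∈ Finset.range m, dist (v i) (v (i + 1))) - dist (v 0) (v 1)) / 2
          + dist (v 0) (v 1) / 2 ∧
      (∑ i ∈ Finset.range m, dist (v i) (v (i + 1))) - 2 * dist (v 0) (v 1)
          + dist (v 0) (v j) ≤
        (3 / 2) * ((∑ i ∈ Finset.range m, dist (v i) (v (i + 1))) - dist (v 0) (v 1)) := by
  intro j hj
  set S := ∑ i ∈ Finset.range m, dist (v i) (v (i + 1)) with hS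
  have h1 : dist (v 0) (v j) ≤ ∑ i ∈ Finset.range j, dist (v i) (v (i + 1)) :=
    dist_le_range_sum_dist v j
  have h2 : dist (v 0) (v j) ≤ ∑ i ∈ Finset.Ico j m, dist (v i) (v (i + 1)) := by
    calc dist (v 0) (v j) = dist (v j) (v m) := by rw [hper, dist_comm]
      _ ≤ _ := dist_le_Ico_sum_dist v hj
  have hsplit : S = (∑ i ∈ Finset.range j, dist (v i) (v (i + 1)))
      + ∑ i ∈ Finset.Ico j m, dist (v i) (v (i + 1)) := by
    rw [hS, ← Nat.Ico_zero_eq_range, ← Finset.sum_Ico_consecutive _ (Nat.zero_le j) hj,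
      Nat.Ico_zero_eq_range]
  have key : 2 * dist (v 0) (v j) ≤ S := by rw [hsplit]; linarith
  have he : (0:ℝ) ≤ dist (v 0) (v 1) := dist_nonneg
  exact ⟨key, by linarith, by linarith⟩
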